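/- arXiv:1502.01401 — 5 statements merged into one kernel-verified Lean document; each statement's English description precedes it below -/
import Mathlib

section
/- Let R₁ and R₂ be Banach R-algebras over a Banach ring R, with ‖xy‖_{Rᵢ} ≤ Cᵢ‖x‖‖y‖. Then on the projective tensor product R₁ ⊗_R R₂ with its projective semi-norm, multiplication satisfies ‖xy‖ ≤ C₁C₂‖x‖‖y‖ for all x, y ∈ R₁ ⊗_R R₂; hence the completed projective tensor product R₁ ⊗̂_R R₂ is a Banach R-algebra. -/
open TensorProduct

/-- The projective tensor product semi-norm on `R₁ ⊗[R] R₂`. -/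
noncomputable def projSeminorm {R M N : Type*} [CommRing R]
    [AddCommGroup M] [Module R M] [AddCommGroup N] [Module R N]
    (nM : M → ℝ) (nN : N → ℝ) (x : M ⊗[R] N) : ℝ :=
  sInf {c : ℝ | ∃ L : List (M × N),
    x = (L.map fun p => p.1 ⊗ₜ[R] p.2).sum ∧ c = (L.map fun p => nM p.1 * nN p.2).sum}

private lemma repExists {R M N : Type*} [CommRing R]
    [AddCommGroup M] [Module R M] [AddCommGroup N] [Module R N] (x : M ⊗[R] N) :
    ∃ L : List (M × N), x = (L.map fun p => p.1 ⊗ₜ[R] p.2).sum := by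
  induction x with
  | zero => exact ⟨[], rfl⟩
  | tmul a b => exact ⟨[(a, b)], by simp⟩
  | add u v hu hv =>
    obtain ⟨L, hL⟩ := hu; obtain ⟨M, hM⟩ := hv
    exact ⟨L ++ M, by simp [hL, hM]⟩

private lemma sumFlatMap {α γ : Type*} [AddCommMonoid γ] (L : List α) (F : α → List γ) :
    (L.flatMap F).sum = (L.map fun a => (F a).sum).sum := by
  induction L with
  | nil => simp
  | cons a L ih => simp [List.flatMap_cons, List.sum_append, ih]

private lemma sumFlatMapProd {α β γ : Type*} [NonUnitalNonAssocSemiring γ]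
    (L : List α) (Mx : List β) (f : α → γ) (g : β → γ) :
    (L.flatMap fun a => Mx.map fun b => f a * g b).sum
      = (L.map f).sum * (Mx.map g).sum := by
  rw [sumFlatMap]
  induction L with
  | nil => simp
  | cons a L ih =>
    simp only [List.map_cons, List.sum_cons, ih, add_mul, List.sum_map_mul_left, List.sum_map_mul_right]

private lemma auxInf {s : Set ℝ} (hs : s.Nonempty) {a b : ℝ} (ha : 0 ≤ a)
    (h : ∀ c ∈ s, b ≤ a * c) : b ≤ a * sInf s := by
  rcases ha.eq_or_lt with rfl | ha'
  · obtain ⟨c, hc⟩ := hs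
    simpa using h c hc
  · rw [← div_le_iff₀' ha']
    exact le_csInf hs fun c hc => (div_le_iff₀' ha').2 (h c hc)

/-- For Banach `R`-algebras `R₁, R₂` with `ν_i (x y) ≤ C_i ν_i x ν_i y`,
multiplication on `R₁ ⊗[R] R₂` satisfies
`‖x * y‖ ≤ C₁ * C₂ * ‖x‖ * ‖y‖` for the projective tensor semi-norm; hence the completed
projective tensor product `R₁ ⊗̂[R] R₂` is a Banach `R`-algebra. -/
theorem stmt5 {R R₁ R₂ : Type*} [CommRing R] [CommRing R₁] [CommRing R₂]
    [Algebra R R₁] [Algebra R R₂]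
    (ν₁ : R₁ → ℝ) (ν₂ : R₂ → ℝ)
    (h₁nonneg : ∀ a : R₁, 0 ≤ ν₁ a) (h₂nonneg : ∀ a : R₂, 0 ≤ ν₂ a)
    (C₁ C₂ : ℝ) (hC₁ : 0 < C₁) (hC₂ : 0 < C₂)
    (h₁mul : ∀ a b : R₁, ν₁ (a * b) ≤ C₁ * ν₁ a * ν₁ b)
    (h₂mul : ∀ a b : R₂, ν₂ (a * b) ≤ C₂ * ν₂ a * ν₂ b)
    (x y : R₁ ⊗[R] R₂) :
    projSeminorm ν₁ ν₂ (x * y) ≤ C₁ * C₂ * projSeminorm ν₁ ν₂ x * projSeminorm ν₁ ν₂ y := by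
  set S : R₁ ⊗[R] R₂ → Set ℝ := fun z => {c : ℝ | ∃ L : List (R₁ × R₂),
    z = (L.map fun p => p.1 ⊗ₜ[R] p.2).sum ∧ c = (L.map fun p => ν₁ p.1 * ν₂ p.2).sum}
    with hS
  have hNE : ∀ z, (S z).Nonempty := fun z => by
    obtain ⟨L, hL⟩ := repExists z
    exact ⟨_, L, hL, rfl⟩
  have hnn : ∀ z, ∀ c ∈ S z, 0 ≤ c := by
    rintro z c ⟨L, -, rfl⟩
    exact List.sum_nonneg (by
      intro t ht
      obtain ⟨p, -, rfl⟩ := List.mem_map.1 ht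
      exact mul_nonneg (h₁nonneg _) (h₂nonneg _))
  have hBdd : ∀ z, BddBelow (S z) := fun z => ⟨0, fun c hc => hnn z c hc⟩
  have key : ∀ cx ∈ S x, ∀ cy ∈ S y, projSeminorm ν₁ ν₂ (x * y) ≤ C₁ * C₂ * cx * cy := by
    rintro cx ⟨L, hLx, rfl⟩ cy ⟨M, hMy, rfl⟩
    set PL : List (R₁ × R₂) := L.flatMap fun p => M.map fun q => (p.1 * q.1, p.2 * q.2) with hPL
    have hrep : x * y = (PL.map fun p => p.1 ⊗ₜ[R] p.2).sum := by
      rw [hLx, hMy, hPL, List.map_flatMap]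
      simp only [List.map_map, Function.comp_def, ← Algebra.TensorProduct.tmul_mul_tmul]
      exact (sumFlatMapProd L M (fun p => p.1 ⊗ₜ[R] p.2) (fun q => q.1 ⊗ₜ[R] q.2)).symm
    have hmem : (PL.map fun p => ν₁ p.1 * ν₂ p.2).sum ∈ S (x * y) := ⟨PL, hrep, rfl⟩
    refine (csInf_le (hBdd _) hmem).trans ?_
    have hle : (PL.map fun p => ν₁ p.1 * ν₂ p.2).sum ≤
        (L.flatMap fun p => M.map fun q =>
          (C₁ * C₂ * (ν₁ p.1 * ν₂ p.2)) * (ν₁ q.1 * ν₂ q.2)).sum := by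
      rw [hPL, List.map_flatMap, sumFlatMap, sumFlatMap]
      apply List.sum_le_sum
      intro p _
      simp only [List.map_map, Function.comp_def]
      apply List.sum_le_sum
      intro q _
      calc ν₁ (p.1 * q.1) * ν₂ (p.2 * q.2)
          ≤ (C₁ * ν₁ p.1 * ν₁ q.1) * (C₂ * ν₂ p.2 * ν₂ q.2) :=
            mul_le_mul (h₁mul _ _) (h₂mul _ _) (h₂nonneg _) (by have := h₁nonneg p.1; have := h₁nonneg q.1; positivity)
        _ = (C₁ * C₂ * (ν₁ p.1 * ν₂ p.2)) * (ν₁ q.1 * ν₂ q.2) := by ring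
    refine hle.trans (le_of_eq ?_)
    rw [sumFlatMapProd L M (fun p => C₁ * C₂ * (ν₁ p.1 * ν₂ p.2)) (fun q => ν₁ q.1 * ν₂ q.2),
      List.sum_map_mul_left]
  have step1 : ∀ cx ∈ S x, projSeminorm ν₁ ν₂ (x * y) ≤ (C₁ * C₂ * cx) * sInf (S y) := by
    intro cx hcx
    refine auxInf (hNE y) ?_ ?_
    · have := hnn x cx hcx; positivity
    · intro cy hcy
      linarith [key cx hcx cy hcy]
  have step2 : projSeminorm ν₁ ν₂ (x * y) ≤ (C₁ * C₂ * sInf (S y)) * sInf (S x) := by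
    refine auxInf (hNE x) ?_ ?_
    · have : 0 ≤ sInf (S y) := Real.sInf_nonneg (hnn y); positivity
    · intro cx hcx
      calc projSeminorm ν₁ ν₂ (x * y) ≤ (C₁ * C₂ * cx) * sInf (S y) := step1 cx hcx
        _ = (C₁ * C₂ * sInf (S y)) * cx := by ring
  calc projSeminorm ν₁ ν₂ (x * y) ≤ (C₁ * C₂ * sInf (S y)) * sInf (S x) := step2
    _ = C₁ * C₂ * projSeminorm ν₁ ν₂ x * projSeminorm ν₁ ν₂ y := by
        simp only [projSeminorm, hS]; ring
end

section
/- Let (C, ⊗, 1) be a closed symmetric monoidal quasi-abelian category with enough flat projectives. Then every projective object of C is flat. Moreover, in any strictly exact sequence 0 → E' → E → E'' → 0 with E and E'' projective, E' is projective. -/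
open CategoryTheory CategoryTheory.Limits CategoryTheory.MonoidalCategory

universe v u

variable {C : Type u} [Category.{v} C]

section Defs

variable [HasZeroMorphisms C] [HasKernels C] [HasCokernels C]

/-- A morphism is strict if the canonical map `coim f → im f` is an isomorphism. -/
def IsStrictMorphism {V W : C} (f : V ⟶ W) : Prop :=
  IsIso (Abelian.coimageImageComparison f)

/-- A strict epimorphism. -/
def IsStrictEpi {V W : C} (f : V ⟶ W) : Prop :=
  Epi f ∧ IsStrictMorphism f

/-- A strict short exact sequence `0 → E' → E → E'' → 0`: `f` is a kernel of `g` and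
`g` is a cokernel of `f`. -/
def IsStrictSES {E' E E'' : C} (f : E' ⟶ E) (g : E ⟶ E'') : Prop :=
  ∃ w : f ≫ g = 0,
    Nonempty (IsLimit (KernelFork.ofι f w)) ∧
    Nonempty (IsColimit (CokernelCofork.ofπ g w))

/-- Projectivity with respect to strict epimorphisms. -/
def IsProjectiveStrict (P : C) : Prop :=
  ∀ ⦃V W : C⦄ (f : V ⟶ W), IsStrictEpi f →
    Function.Surjective (fun (g : P ⟶ V) => g ≫ f)

/-- An object `F` is flat if `E ↦ E ⊗ F` preserves strict short exact sequences. -/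
def IsFlat [MonoidalCategory C] (F : C) : Prop :=
  ∀ ⦃E' E E'' : C⦄ (f : E' ⟶ E) (g : E ⟶ E''),
    IsStrictSES f g → IsStrictSES (f ▷ F) (g ▷ F)

lemma aux_strictEpi {E' E E'' : C} {f : E' ⟶ E} {g : E ⟶ E''} (w : f ≫ g = 0)
    (hk : IsLimit (KernelFork.ofι f w)) (hc : IsColimit (CokernelCofork.ofπ g w)) :
    IsStrictEpi g := by
  have hepi : Epi g := epi_of_isColimit_cofork hc
  refine ⟨hepi, ?_⟩
  have hπ0 : cokernel.π g = 0 := by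
    rw [← cancel_epi g, cokernel.condition, comp_zero]
  set π' : E ⟶ Abelian.coimage g := cokernel.π (kernel.ι g) with hπ'
  have hfπ' : f ≫ π' = 0 := by
    have : kernel.lift g f w ≫ kernel.ι g = f := kernel.lift_ι g f w
    rw [← this, Category.assoc, cokernel.condition, comp_zero]
  set ψ : Abelian.coimage g ⟶ E'' := cokernel.desc (kernel.ι g) g (kernel.condition g) with hψ
  obtain ⟨χ, hχ⟩ := CokernelCofork.IsColimit.desc' hc π' hfπ'
  have hχ' : g ≫ χ = π' := hχ
  have hχψ : χ ≫ ψ = 𝟙 E'' := by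
    rw [← cancel_epi g, ← Category.assoc, hχ', Category.comp_id]
    simp [hψ, hπ']
  have hψχ : ψ ≫ χ = 𝟙 (Abelian.coimage g) := by
    rw [← cancel_epi π', ← Category.assoc, Category.comp_id]
    simp only [hπ', hψ, cokernel.π_desc]
    exact hχ'
  set ι : Abelian.image g ⟶ E'' := kernel.ι (cokernel.π g) with hι
  set lam : E'' ⟶ Abelian.image g :=
    kernel.lift (cokernel.π g) (𝟙 E'') (by rw [hπ0, comp_zero]) with hlam
  have hlamι : lam ≫ ι = 𝟙 E'' := kernel.lift_ι _ _ _
  have hιlam : ι ≫ lam = 𝟙 (Abelian.image g) := by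
    rw [← cancel_mono ι, Category.assoc, hlamι, Category.comp_id, Category.id_comp]
  have hcmp : Abelian.coimageImageComparison g = ψ ≫ lam := by
    rw [← cancel_mono ι, ← cancel_epi π']
    have h1 : π' ≫ Abelian.coimageImageComparison g ≫ ι = g :=
      Abelian.coimage_image_factorisation g
    rw [h1]
    simp only [Category.assoc]
    rw [hlamι, Category.comp_id]
    simp [hψ, hπ']
  rw [IsStrictMorphism, hcmp]
  refine ⟨ι ≫ χ, ?_, ?_⟩
  · calc (ψ ≫ lam) ≫ ι ≫ χ = ψ ≫ (lam ≫ ι) ≫ χ := by simp only [Category.assoc]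
      _ = ψ ≫ χ := by rw [hlamι, Category.id_comp]
      _ = 𝟙 _ := hψχ
  · calc (ι ≫ χ) ≫ ψ ≫ lam = ι ≫ (χ ≫ ψ) ≫ lam := by simp only [Category.assoc]
      _ = ι ≫ lam := by rw [hχψ, Category.id_comp]
      _ = 𝟙 _ := hιlam


end Defs

/-- Let `C` be a closed symmetric monoidal quasi-abelian category with
enough flat projectives. Then every projective object of `C` is flat; moreover, in any
strictly exact sequence `0 → E' → E → E'' → 0` with `E` and `E''` projective, `E'` is
projective. -/
theorem stmt8 [Preadditive C] [HasKernels C] [HasCokernels C]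
    [MonoidalCategory C] [SymmetricCategory C] [MonoidalClosed C]
    -- quasi-abelian stability axioms
    [HasPullbacks C] [HasPushouts C]
    (hqa₁ : ∀ {X Y Z : C} (f : X ⟶ Z) (g : Y ⟶ Z),
      IsStrictEpi f → IsStrictEpi (pullback.snd f g))
    (hqa₂ : ∀ {X Y Z : C} (f : X ⟶ Y) (g : X ⟶ Z),
      (Mono f ∧ IsStrictMorphism f) → (Mono (pushout.inr f g) ∧ IsStrictMorphism (pushout.inr f g)))
    -- enough flat projectives
    (hefp : ∀ X : C, ∃ (P : C) (p : P ⟶ X), IsStrictEpi p ∧ IsFlat P ∧ IsProjectiveStrict P) :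
    (∀ P : C, IsProjectiveStrict P → IsFlat P) ∧
    (∀ ⦃E' E E'' : C⦄ (f : E' ⟶ E) (g : E ⟶ E''), IsStrictSES f g →
      IsProjectiveStrict E → IsProjectiveStrict E'' → IsProjectiveStrict E') := by
  constructor
  · -- every projective is flat
    intro P hP E' E E'' f g hses
    obtain ⟨Q, p, hpe, hQflat, hQproj⟩ := hefp P
    obtain ⟨s, hs0⟩ := hP p hpe (𝟙 P)
    have hs : s ≫ p = 𝟙 P := hs0
    obtain ⟨wQ, ⟨kf⟩, ⟨cc⟩⟩ := hQflat f g hses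
    haveI monoFQ : Mono (f ▷ Q) := mono_of_isLimit_fork kf
    haveI epiGQ : Epi (g ▷ Q) := epi_of_isColimit_cofork cc
    have hret : ∀ (A : C), (A ◁ s) ≫ (A ◁ p) = 𝟙 (A ⊗ P) := fun A => by
      rw [← MonoidalCategory.whiskerLeft_comp, hs, MonoidalCategory.whiskerLeft_id]
    have wP : (f ▷ P) ≫ (g ▷ P) = 0 := by
      have h1 : ((f ▷ P) ≫ (g ▷ P)) ≫ (E'' ◁ s) = (E' ◁ s) ≫ ((f ▷ Q) ≫ (g ▷ Q)) := by
        rw [Category.assoc, ← whisker_exchange g s, ← Category.assoc,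
          ← whisker_exchange f s, Category.assoc]
      calc (f ▷ P) ≫ (g ▷ P)
          = (((f ▷ P) ≫ (g ▷ P)) ≫ (E'' ◁ s)) ≫ (E'' ◁ p) := by
            rw [Category.assoc, hret, Category.comp_id]
        _ = 0 := by rw [h1, wQ, comp_zero, zero_comp]
    haveI monoFP : Mono (f ▷ P) := by
      constructor
      intro T a b hab
      have h2 : (a ≫ (E' ◁ s)) ≫ (f ▷ Q) = (b ≫ (E' ◁ s)) ≫ (f ▷ Q) := by
        rw [Category.assoc, Category.assoc, whisker_exchange f s,
          ← Category.assoc, ← Category.assoc, hab]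
      have h3 : a ≫ (E' ◁ s) = b ≫ (E' ◁ s) := by
        rwa [cancel_mono (f ▷ Q)] at h2
      calc a = (a ≫ (E' ◁ s)) ≫ (E' ◁ p) := by rw [Category.assoc, hret, Category.comp_id]
        _ = (b ≫ (E' ◁ s)) ≫ (E' ◁ p) := by rw [h3]
        _ = b := by rw [Category.assoc, hret, Category.comp_id]
    haveI epiGP : Epi (g ▷ P) := by
      constructor
      intro T a b hab
      have h2 : (g ▷ Q) ≫ ((E'' ◁ p) ≫ a) = (g ▷ Q) ≫ ((E'' ◁ p) ≫ b) := by
        rw [← Category.assoc, ← Category.assoc, ← whisker_exchange g p,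
          Category.assoc, Category.assoc, hab]
      have h3 : (E'' ◁ p) ≫ a = (E'' ◁ p) ≫ b := by
        rwa [cancel_epi (g ▷ Q)] at h2
      calc a = ((E'' ◁ s) ≫ (E'' ◁ p)) ≫ a := by rw [hret, Category.id_comp]
        _ = ((E'' ◁ s) ≫ (E'' ◁ p)) ≫ b := by rw [Category.assoc, h3, ← Category.assoc]
        _ = b := by rw [hret, Category.id_comp]
    refine ⟨wP, ⟨?_⟩, ⟨?_⟩⟩
    · refine KernelFork.IsLimit.ofι' (f ▷ P) wP (fun {T} t ht => ?_)
      obtain ⟨l, hl0⟩ := KernelFork.IsLimit.lift' kf (t ≫ (E ◁ s))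
        (by rw [Category.assoc, whisker_exchange g s, ← Category.assoc, ht, zero_comp])
      have hl : l ≫ (f ▷ Q) = t ≫ (E ◁ s) := hl0
      refine ⟨l ≫ (E' ◁ p), ?_⟩
      rw [Category.assoc, whisker_exchange f p, ← Category.assoc, hl,
        Category.assoc, hret, Category.comp_id]
    · refine CokernelCofork.IsColimit.ofπ' (g ▷ P) wP (fun {T} t ht => ?_)
      obtain ⟨d, hd0⟩ := CokernelCofork.IsColimit.desc' cc ((E ◁ p) ≫ t)
        (by rw [← Category.assoc, ← whisker_exchange f p, Category.assoc, ht, comp_zero])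
      have hd : (g ▷ Q) ≫ d = (E ◁ p) ≫ t := hd0
      refine ⟨(E'' ◁ s) ≫ d, ?_⟩
      rw [← Category.assoc, ← whisker_exchange g s, Category.assoc, hd,
        ← Category.assoc, hret, Category.id_comp]
  · -- E' projective whenever E and E'' are
    intro E' E E'' f g hses hE hE''
    obtain ⟨w, ⟨hk⟩, ⟨hc⟩⟩ := hses
    have hgse : IsStrictEpi g := aux_strictEpi w hk hc
    obtain ⟨t, ht0⟩ := hE'' g hgse (𝟙 E'')
    have ht : t ≫ g = 𝟙 E'' := ht0
    haveI monoF : Mono f := mono_of_isLimit_fork hk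
    have cond : (𝟙 E - g ≫ t) ≫ g = 0 := by
      rw [Preadditive.sub_comp, Category.id_comp, Category.assoc, ht, Category.comp_id, sub_self]
    obtain ⟨r, hr0⟩ := KernelFork.IsLimit.lift' hk (𝟙 E - g ≫ t) cond
    have hr : r ≫ f = 𝟙 E - g ≫ t := hr0
    have hfr : f ≫ r = 𝟙 E' := by
      rw [← cancel_mono f, Category.assoc, hr, Preadditive.comp_sub, Category.comp_id,
        ← Category.assoc, w, zero_comp, sub_zero, Category.id_comp]
    intro V W h hh u
    obtain ⟨l, hl0⟩ := hE h hh (r ≫ u)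
    have hl : l ≫ h = r ≫ u := hl0
    refine ⟨f ≫ l, ?_⟩
    show (f ≫ l) ≫ h = u
    rw [Category.assoc, hl, ← Category.assoc, hfr, Category.id_comp]
end

section
/- Let (C, ⊗, 1) be a closed symmetric monoidal quasi-abelian category with enough flat projectives. In any strictly exact sequence 0 → E' → E → E'' → 0 with E and E'' flat, E' is flat. (Two-out-of-three property for flat objects.) -/
open CategoryTheory CategoryTheory.Limits CategoryTheory.MonoidalCategory

universe v u

variable {C : Type u} [Category.{v} C]

section Aux

variable [Preadditive C] [HasKernels C] [HasCokernels C]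

theorem isStrictEpi_of_isCokernel {A B Q : C} {m : A ⟶ B} {q : B ⟶ Q} (w : m ≫ q = 0)
    (h : IsColimit (CokernelCofork.ofπ q w)) : IsStrictEpi q := by
  have hepi : Epi q := by
    have := epi_of_isColimit_cofork h
    simpa using this
  refine ⟨hepi, ?_⟩
  haveI := hepi
  have hq' : IsColimit (CokernelCofork.ofπ q (kernel.condition q)) := by
    refine CokernelCofork.IsColimit.ofπ' q (kernel.condition q) ?_
    intro A' k hk
    have hmk : m ≫ k = 0 := by
      have hfac : kernel.lift q m w ≫ kernel.ι q = m := kernel.lift_ι ..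
      rw [← hfac, Category.assoc, hk, comp_zero]
    obtain ⟨l, hl⟩ := CokernelCofork.IsColimit.desc' h k hmk
    exact ⟨l, by simpa using hl⟩
  have hcomm : cokernel.π (kernel.ι q) ≫
      (IsColimit.coconePointUniqueUpToIso (cokernelIsCokernel (kernel.ι q)) hq').hom = q := by
    have := IsColimit.comp_coconePointUniqueUpToIso_hom (cokernelIsCokernel (kernel.ι q)) hq'
      WalkingParallelPair.one
    simpa using this
  set χ := IsColimit.coconePointUniqueUpToIso (cokernelIsCokernel (kernel.ι q)) hq' with hχ
  have key : Abelian.coimageImageComparison q ≫ Abelian.image.ι q = χ.hom := by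
    have h1 : cokernel.π (kernel.ι q) ≫ (Abelian.coimageImageComparison q ≫ Abelian.image.ι q)
        = cokernel.π (kernel.ι q) ≫ χ.hom := by
      rw [hcomm]
      simpa using Abelian.coimage_image_factorisation q
    exact (cancel_epi _).1 h1
  refine ⟨⟨Abelian.image.ι q ≫ χ.inv, ?_, ?_⟩⟩
  · rw [← Category.assoc, key]
    simp
  · rw [← cancel_mono (Abelian.image.ι q)]
    simp [Category.assoc, key]

theorem isIso_kernelι_of_eq_zero {X Y : C} (f : X ⟶ Y) (hf : f = 0) : IsIso (kernel.ι f) := by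
  rw [hf]
  infer_instance

noncomputable def IsStrictEpi.desc {B Q : C} {q : B ⟶ Q} (hq : IsStrictEpi q) {Z : C} (h : B ⟶ Z)
    (hh : kernel.ι q ≫ h = 0) : { d : Q ⟶ Z // q ≫ d = h } := by
  obtain ⟨hepi, hstr⟩ := hq
  haveI : Epi q := hepi
  haveI : IsIso (Abelian.coimageImageComparison q) := hstr
  have hπ0 : cokernel.π q = 0 := by
    rw [← cancel_epi q, cokernel.condition, comp_zero]
  haveI : IsIso (Abelian.image.ι q) := isIso_kernelι_of_eq_zero _ hπ0
  have hfact : q = Abelian.coimage.π q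
      ≫ (Abelian.coimageImageComparison q ≫ Abelian.image.ι q) :=
    by simpa using (Abelian.coimage_image_factorisation q).symm
  refine ⟨inv (Abelian.coimageImageComparison q ≫ Abelian.image.ι q)
    ≫ cokernel.desc (kernel.ι q) h hh, ?_⟩
  have hkey := congrArg (fun x => x ≫ (inv (Abelian.coimageImageComparison q
    ≫ Abelian.image.ι q) ≫ cokernel.desc (kernel.ι q) h hh)) hfact
  rw [hkey, Category.assoc, IsIso.hom_inv_id_assoc]
  exact cokernel.π_desc _ _ _

theorem monoStrict_of_isKernel {A B Q : C} {i : A ⟶ B} {ψ : B ⟶ Q} (w : i ≫ ψ = 0)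
    (h : IsLimit (KernelFork.ofι i w)) : Mono i ∧ IsStrictMorphism i := by
  have hmono : Mono i := by
    have := mono_of_isLimit_fork h
    simpa using this
  refine ⟨hmono, ?_⟩
  haveI := hmono
  have hk' : IsLimit (KernelFork.ofι i (cokernel.condition i)) := by
    refine KernelFork.IsLimit.ofι' i (cokernel.condition i) ?_
    intro T k hk
    have hkψ : k ≫ ψ = 0 := by
      have hd : cokernel.π i ≫ cokernel.desc i ψ w = ψ := cokernel.π_desc ..
      rw [← hd, ← Category.assoc, hk, zero_comp]
    obtain ⟨l, hl⟩ := KernelFork.IsLimit.lift' h k hkψ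
    exact ⟨l, by simpa using hl⟩
  have hcomm : (IsLimit.conePointUniqueUpToIso hk' (kernelIsKernel (cokernel.π i))).hom
      ≫ kernel.ι (cokernel.π i) = i := by
    have := IsLimit.conePointUniqueUpToIso_hom_comp hk' (kernelIsKernel (cokernel.π i))
      WalkingParallelPair.zero
    simpa using this
  set χ := IsLimit.conePointUniqueUpToIso hk' (kernelIsKernel (cokernel.π i)) with hχ
  have key : Abelian.coimage.π i ≫ Abelian.coimageImageComparison i = χ.hom := by
    rw [← cancel_mono (Abelian.image.ι i)]
    rw [Category.assoc]
    have := Abelian.coimage_image_factorisation i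
    simp only [Abelian.coimage.π] at this ⊢
    rw [this, hcomm]
  refine ⟨⟨χ.inv ≫ Abelian.coimage.π i, ?_, ?_⟩⟩
  · rw [← cancel_epi (Abelian.coimage.π i)]
    rw [← Category.assoc, ← Category.assoc, key]
    simp
  · rw [Category.assoc, key]
    simp

/-- The canonical map to the image is an epimorphism (the key quasi-abelian fact,
using stability of strict monos under pushout). -/
theorem epi_factorThruImage' [HasPushouts C]
    (hqa₂ : ∀ {X Y Z : C} (f : X ⟶ Y) (g : X ⟶ Z),
      (Mono f ∧ IsStrictMorphism f) → (Mono (pushout.inr f g) ∧ IsStrictMorphism (pushout.inr f g)))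
    {A B Q I : C} {φ : A ⟶ B} {ψ : B ⟶ Q} (wψ : φ ≫ ψ = 0)
    (hψ : IsColimit (CokernelCofork.ofπ ψ wψ))
    {ι : I ⟶ B} (wι : ι ≫ ψ = 0) (hι : IsLimit (KernelFork.ofι ι wι))
    {β : A ⟶ I} (hβ : β ≫ ι = φ) : Epi β := by
  obtain ⟨hm, hs⟩ := monoStrict_of_isKernel wι hι
  have hp := hqa₂ ι (cokernel.π β) ⟨hm, hs⟩
  haveI : Mono (pushout.inr ι (cokernel.π β)) := hp.1
  have h1 : φ ≫ pushout.inl ι (cokernel.π β) = 0 := by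
    rw [← hβ, Category.assoc, pushout.condition, ← Category.assoc, cokernel.condition, zero_comp]
  obtain ⟨d, hd⟩ := CokernelCofork.IsColimit.desc' hψ _ h1
  have hd' : ψ ≫ d = pushout.inl ι (cokernel.π β) := by simpa using hd
  have h2 : cokernel.π β ≫ pushout.inr ι (cokernel.π β) = 0 := by
    rw [← pushout.condition, ← hd', ← Category.assoc, wι, zero_comp]
  have h3 : cokernel.π β = 0 := by
    rw [← cancel_mono (pushout.inr ι (cokernel.π β)), h2, zero_comp]
  exact Preadditive.epi_of_cokernel_zero h3

theorem isStrictEpi_comp [HasPullbacks C]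
    (hqa₁ : ∀ {X Y Z : C} (f : X ⟶ Z) (g : Y ⟶ Z),
      IsStrictEpi f → IsStrictEpi (pullback.snd f g))
    {A B D : C} {e₁ : A ⟶ B} {e₂ : B ⟶ D} (h₁ : IsStrictEpi e₁) (h₂ : IsStrictEpi e₂) :
    IsStrictEpi (e₁ ≫ e₂) := by
  haveI : Epi e₁ := h₁.1
  haveI : Epi e₂ := h₂.1
  haveI hepi : Epi (e₁ ≫ e₂) := epi_comp _ _
  have hcolim : IsColimit (CokernelCofork.ofπ (e₁ ≫ e₂) (kernel.condition _)) := by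
    refine CokernelCofork.IsColimit.ofπ' _ _ ?_
    intro Z h hh
    have hk1 : kernel.ι e₁ ≫ h = 0 := by
      have hz : kernel.ι e₁ ≫ (e₁ ≫ e₂) = 0 := by
        rw [← Category.assoc, kernel.condition, zero_comp]
      have hj : kernel.lift (e₁ ≫ e₂) _ hz ≫ kernel.ι (e₁ ≫ e₂) = kernel.ι e₁ :=
        kernel.lift_ι ..
      rw [← hj, Category.assoc, hh, comp_zero]
    obtain ⟨h₁', hh₁⟩ := h₁.desc h hk1
    have hcond : pullback.fst e₁ (kernel.ι e₂) ≫ e₁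
        = pullback.snd e₁ (kernel.ι e₂) ≫ kernel.ι e₂ := pullback.condition
    have hδ : pullback.fst e₁ (kernel.ι e₂) ≫ (e₁ ≫ e₂) = 0 := by
      rw [← Category.assoc, hcond, Category.assoc, kernel.condition, comp_zero]
    have hδh : pullback.fst e₁ (kernel.ι e₂) ≫ h = 0 := by
      have hj : kernel.lift (e₁ ≫ e₂) _ hδ ≫ kernel.ι (e₁ ≫ e₂)
          = pullback.fst e₁ (kernel.ι e₂) := kernel.lift_ι ..
      rw [← hj, Category.assoc, hh, comp_zero]
    haveI : Epi (pullback.snd e₁ (kernel.ι e₂)) := (hqa₁ e₁ (kernel.ι e₂) h₁).1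
    have hk2 : kernel.ι e₂ ≫ h₁' = 0 := by
      rw [← cancel_epi (pullback.snd e₁ (kernel.ι e₂)), comp_zero, ← Category.assoc,
        ← hcond, Category.assoc, hh₁, hδh]
    obtain ⟨h₂', hh₂⟩ := h₂.desc h₁' hk2
    exact ⟨h₂', by rw [Category.assoc, hh₂, hh₁]⟩
  exact isStrictEpi_of_isCokernel _ hcolim

section Monoidal

variable [MonoidalCategory C] [SymmetricCategory C] [MonoidalClosed C]

open MonoidalClosed

theorem isZero_kernel_id (X : C) : IsZero (kernel (𝟙 X)) := by
  have h : kernel.ι (𝟙 X) = 0 := by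
    have := kernel.condition (𝟙 X)
    simpa using this
  rw [IsZero.iff_id_eq_zero, ← cancel_mono (kernel.ι (𝟙 X))]
  simp [h]

theorem hom_ext_of_isZero_right {Z W X : C} (hZ : IsZero Z) (u v : X ⊗ Z ⟶ W) : u = v := by
  have h := hZ.eq_of_src (curry u) (curry v)
  have := congrArg uncurry h
  simpa using this

theorem whiskerLeft_zero' {X A B : C} : X ◁ (0 : A ⟶ B) = 0 := by
  have hZ := isZero_kernel_id A
  have h0 : (0 : A ⟶ B) = (0 : A ⟶ kernel (𝟙 A)) ≫ (0 : kernel (𝟙 A) ⟶ B) := by simp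
  rw [h0, MonoidalCategory.whiskerLeft_comp]
  rw [hom_ext_of_isZero_right hZ (X ◁ (0 : kernel (𝟙 A) ⟶ B)) 0, comp_zero]

theorem whiskerRight_zero' {A B Y : C} : (0 : A ⟶ B) ▷ Y = 0 := by
  have hZ := isZero_kernel_id A
  have h0 : (0 : A ⟶ B) = (0 : A ⟶ kernel (𝟙 A)) ≫ (0 : kernel (𝟙 A) ⟶ B) := by simp
  rw [h0, MonoidalCategory.comp_whiskerRight]
  have hz : (0 : kernel (𝟙 A) ⟶ B) ▷ Y = 0 := by
    rw [← cancel_epi (β_ Y (kernel (𝟙 A))).hom]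
    exact hom_ext_of_isZero_right hZ _ _
  rw [hz, comp_zero]

theorem curry_zero' {X A W : C} : curry (0 : X ⊗ A ⟶ W) = 0 := by
  have h : uncurry (0 : A ⟶ (ihom X).obj W) = 0 := by
    rw [uncurry_eq, whiskerLeft_zero', zero_comp]
  rw [← h, curry_uncurry]

theorem epi_whiskerLeft' {B Q X : C} {q : B ⟶ Q} (hq : Epi q) : Epi (X ◁ q) := by
  constructor
  intro Z u v huv
  have h1 : q ≫ curry u = q ≫ curry v := by
    rw [← curry_natural_left, ← curry_natural_left, huv]
  have h2 := (cancel_epi q).1 h1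
  calc u = uncurry (curry u) := (uncurry_curry u).symm
    _ = uncurry (curry v) := by rw [h2]
    _ = v := uncurry_curry v

noncomputable def isCokernel_whiskerLeft {A B Q : C} {m : A ⟶ B} {q : B ⟶ Q} (w : m ≫ q = 0)
    (h : IsColimit (CokernelCofork.ofπ q w)) (X : C) :
    IsColimit (CokernelCofork.ofπ (X ◁ q)
      (show (X ◁ m) ≫ (X ◁ q) = 0 by
        rw [← MonoidalCategory.whiskerLeft_comp, w, whiskerLeft_zero'])) := by
  haveI : Epi q := by
    have := epi_of_isColimit_cofork h
    simpa using this
  haveI : Epi (X ◁ q) := epi_whiskerLeft' inferInstance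
  refine CokernelCofork.IsColimit.ofπ' _ _ ?_
  intro Z k hk
  have hc : m ≫ curry k = 0 := by
    rw [← curry_natural_left, hk, curry_zero']
  obtain ⟨d, hd⟩ := CokernelCofork.IsColimit.desc' h _ hc
  have hd' : q ≫ d = curry k := by simpa using hd
  refine ⟨uncurry d, ?_⟩
  have h2 : uncurry (q ≫ d) = uncurry (curry k) := by rw [hd']
  rw [uncurry_natural_left] at h2
  simpa using h2

noncomputable def isCokernel_whiskerRight {A B Q : C} {m : A ⟶ B} {q : B ⟶ Q} (w : m ≫ q = 0)
    (h : IsColimit (CokernelCofork.ofπ q w)) (Y : C) :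
    IsColimit (CokernelCofork.ofπ (q ▷ Y)
      (show (m ▷ Y) ≫ (q ▷ Y) = 0 by
        rw [← MonoidalCategory.comp_whiskerRight, w, whiskerRight_zero'])) := by
  have hL := isCokernel_whiskerLeft w h Y
  haveI : Epi q := by
    have := epi_of_isColimit_cofork h
    simpa using this
  haveI : Epi (Y ◁ q) := epi_whiskerLeft' inferInstance
  have heq : q ▷ Y = (β_ B Y).hom ≫ (Y ◁ q) ≫ (β_ Q Y).inv := by
    rw [← Category.assoc, ← BraidedCategory.braiding_naturality_left, Category.assoc,
      Iso.hom_inv_id, Category.comp_id]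
  haveI : Epi (q ▷ Y) := by
    rw [heq]
    infer_instance
  refine CokernelCofork.IsColimit.ofπ' _ _ ?_
  intro Z k hk
  have hk' : (Y ◁ m) ≫ ((β_ Y B).hom ≫ k) = 0 := by
    rw [← Category.assoc, BraidedCategory.braiding_naturality_right, Category.assoc, hk,
      comp_zero]
  obtain ⟨d, hd⟩ := CokernelCofork.IsColimit.desc' hL _ hk'
  have hd' : (Y ◁ q) ≫ d = (β_ Y B).hom ≫ k := by simpa using hd
  refine ⟨(β_ Q Y).hom ≫ d, ?_⟩
  rw [← Category.assoc, BraidedCategory.braiding_naturality_left, Category.assoc, hd',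
    ← Category.assoc, SymmetricCategory.symmetry, Category.id_comp]

theorem kernel_whiskerLeft_of_whiskerRight {E1 E2 E3 P : C} {f : E1 ⟶ E2} {g : E2 ⟶ E3}
    (w : (f ▷ P) ≫ (g ▷ P) = 0) (h : IsLimit (KernelFork.ofι (f ▷ P) w)) :
    Mono (P ◁ f) ∧ ∀ {T : C} (t : T ⟶ P ⊗ E2), t ≫ (P ◁ g) = 0 →
      ∃ s : T ⟶ P ⊗ E1, s ≫ (P ◁ f) = t := by
  haveI hm : Mono (f ▷ P) := by
    have := mono_of_isLimit_fork h
    simpa using this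
  have heq : P ◁ f = (β_ P E1).hom ≫ (f ▷ P) ≫ (β_ P E2).inv := by
    rw [← Category.assoc, ← BraidedCategory.braiding_naturality_right, Category.assoc,
      Iso.hom_inv_id, Category.comp_id]
  constructor
  · rw [heq]
    infer_instance
  · intro T t ht
    have h1 : (t ≫ (β_ P E2).hom) ≫ (g ▷ P) = 0 := by
      rw [Category.assoc, ← BraidedCategory.braiding_naturality_right, ← Category.assoc, ht,
        zero_comp]
    obtain ⟨l, hl⟩ := KernelFork.IsLimit.lift' h _ h1
    have hl' : l ≫ (f ▷ P) = t ≫ (β_ P E2).hom := by simpa using hl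
    refine ⟨l ≫ (β_ P E1).inv, ?_⟩
    simp only [heq, Category.assoc, Iso.inv_hom_id_assoc]
    rw [← Category.assoc, hl', Category.assoc, Iso.hom_inv_id, Category.comp_id]

end Monoidal

/-- Purity: a strict SES with flat middle and right terms stays a kernel sequence
after tensoring (on the left) with any object. -/
theorem purity [MonoidalCategory C] [SymmetricCategory C] [MonoidalClosed C]
    [HasPullbacks C] [HasPushouts C]
    (hqa₁ : ∀ {X Y Z : C} (f : X ⟶ Z) (g : Y ⟶ Z),
      IsStrictEpi f → IsStrictEpi (pullback.snd f g))
    (hqa₂ : ∀ {X Y Z : C} (f : X ⟶ Y) (g : X ⟶ Z),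
      (Mono f ∧ IsStrictMorphism f) → (Mono (pushout.inr f g) ∧ IsStrictMorphism (pushout.inr f g)))
    (hefp : ∀ X : C, ∃ (P : C) (p : P ⟶ X), IsStrictEpi p ∧ IsFlat P ∧ IsProjectiveStrict P)
    {E1 E2 E3 : C} {f : E1 ⟶ E2} {g : E2 ⟶ E3}
    (hses : IsStrictSES f g) (hE : IsFlat E2) (hE'' : IsFlat E3) (X : C) :
    Mono (X ◁ f) ∧ ∀ {T : C} (t : T ⟶ X ⊗ E2), t ≫ (X ◁ g) = 0 →
      ∃ s : T ⟶ X ⊗ E1, s ≫ (X ◁ f) = t := by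
  obtain ⟨wfg, ⟨hker_fg⟩, ⟨hcoker_fg⟩⟩ := hses
  obtain ⟨P, p, hp, hPflat, -⟩ := hefp X
  haveI : Epi p := hp.1
  have hpcolim : IsColimit (CokernelCofork.ofπ p (kernel.condition p)) := by
    refine CokernelCofork.IsColimit.ofπ' _ _ ?_
    intro Z h hh
    exact hp.desc h hh
  have hsesKP : IsStrictSES (kernel.ι p) p :=
    ⟨kernel.condition p, ⟨kernelIsKernel p⟩, ⟨hpcolim⟩⟩
  obtain ⟨wE, ⟨hkE⟩, ⟨hpE⟩⟩ := hE (kernel.ι p) p hsesKP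
  obtain ⟨wE'', ⟨hkE''⟩, -⟩ := hE'' (kernel.ι p) p hsesKP
  obtain ⟨wP, ⟨hfP⟩, -⟩ := hPflat f g ⟨wfg, ⟨hker_fg⟩, ⟨hcoker_fg⟩⟩
  obtain ⟨monoPf, liftPf⟩ := kernel_whiskerLeft_of_whiskerRight wP hfP
  haveI := monoPf
  -- abbreviations for flat row facts
  have hmono_kE3 : Mono (kernel.ι p ▷ E3) := by
    have := mono_of_isLimit_fork hkE''
    simpa using this
  -- cokernel facts
  have hKg : IsColimit (CokernelCofork.ofπ (kernel p ◁ g)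
      (show (kernel p ◁ f) ≫ (kernel p ◁ g) = 0 by
        rw [← MonoidalCategory.whiskerLeft_comp, wfg, whiskerLeft_zero'])) :=
    isCokernel_whiskerLeft wfg hcoker_fg (kernel p)
  have hsKg : IsStrictEpi (kernel p ◁ g) := isStrictEpi_of_isCokernel _ hKg
  have hspE1 : IsStrictEpi (p ▷ E1) :=
    isStrictEpi_of_isCokernel _ (isCokernel_whiskerRight (kernel.condition p) hpcolim E1)
  have hspE2 : IsStrictEpi (p ▷ E2) := isStrictEpi_of_isCokernel wE hpE
  -- the pullback M and the comparison α
  have hexch : (kernel p ◁ f) ≫ (kernel.ι p ▷ E2) = (kernel.ι p ▷ E1) ≫ (P ◁ f) := whisker_exchange (kernel.ι p) f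
  set μ : pullback (kernel.ι p ▷ E2) (P ◁ f) ⟶ kernel p ⊗ E2 := pullback.fst (kernel.ι p ▷ E2) (P ◁ f) with hμdef
  set ν : pullback (kernel.ι p ▷ E2) (P ◁ f) ⟶ P ⊗ E1 := pullback.snd (kernel.ι p ▷ E2) (P ◁ f) with hνdef
  have hμν : μ ≫ (kernel.ι p ▷ E2) = ν ≫ (P ◁ f) := pullback.condition
  have hμw : μ ≫ (kernel p ◁ g) = 0 := by
    rw [← cancel_mono (kernel.ι p ▷ E3), Category.assoc, whisker_exchange (kernel.ι p) g, ← Category.assoc, hμν,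
      Category.assoc, ← MonoidalCategory.whiskerLeft_comp, wfg, whiskerLeft_zero', comp_zero,
      zero_comp]
  haveI : Mono μ := inferInstance
  have hμker : IsLimit (KernelFork.ofι μ hμw) := by
    refine KernelFork.IsLimit.ofι' _ _ ?_
    intro T' r hr
    have hr2 : (r ≫ (kernel.ι p ▷ E2)) ≫ (P ◁ g) = 0 := by
      rw [Category.assoc, ← whisker_exchange (kernel.ι p) g, ← Category.assoc, hr, zero_comp]
    refine ⟨pullback.lift r ((liftPf (r ≫ (kernel.ι p ▷ E2)) hr2).choose)
      (liftPf (r ≫ (kernel.ι p ▷ E2)) hr2).choose_spec.symm, ?_⟩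
    exact pullback.lift_fst ..
  set α : kernel p ⊗ E1 ⟶ pullback (kernel.ι p ▷ E2) (P ◁ f) := pullback.lift (kernel p ◁ f) (kernel.ι p ▷ E1) hexch with hαdef
  have hαμ : α ≫ μ = kernel p ◁ f := pullback.lift_fst ..
  have hαν : α ≫ ν = kernel.ι p ▷ E1 := pullback.lift_snd ..
  have hαepi : Epi α := epi_factorThruImage' hqa₂ _ hKg hμw hμker hαμ
  have hν0 : ν ≫ (p ▷ E1) = 0 := by
    rw [← cancel_epi α, comp_zero, ← Category.assoc, hαν, ← MonoidalCategory.comp_whiskerRight,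
      kernel.condition, whiskerRight_zero']
  have hmono : Mono (X ◁ f) := by
    apply Preadditive.mono_of_cancel_zero
    intro T t ht
    have hτ := hqa₁ (p ▷ E1) t hspE1
    haveI : Epi (pullback.snd (p ▷ E1) t) := hτ.1
    set τ := pullback.snd (p ▷ E1) t
    set y := pullback.fst (p ▷ E1) t
    have hyt : y ≫ (p ▷ E1) = τ ≫ t := pullback.condition
    have h1 : (y ≫ (P ◁ f)) ≫ (p ▷ E2) = 0 := by
      rw [Category.assoc, whisker_exchange p f, ← Category.assoc, hyt, Category.assoc, ht,
        comp_zero]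
    obtain ⟨w1, hw1⟩ := KernelFork.IsLimit.lift' hkE _ h1
    have hw1' : w1 ≫ (kernel.ι p ▷ E2) = y ≫ (P ◁ f) := by simpa using hw1
    have h2 : w1 ≫ (kernel p ◁ g) = 0 := by
      rw [← cancel_mono (kernel.ι p ▷ E3), Category.assoc, whisker_exchange (kernel.ι p) g, ← Category.assoc, hw1',
        Category.assoc, ← MonoidalCategory.whiskerLeft_comp, wfg, whiskerLeft_zero', comp_zero,
        zero_comp]
    obtain ⟨w₀, hw₀⟩ := KernelFork.IsLimit.lift' hμker w1 h2
    have hw₀' : w₀ ≫ μ = w1 := by simpa using hw₀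
    have hyw : y = w₀ ≫ ν := by
      rw [← cancel_mono (P ◁ f), Category.assoc, ← hμν, ← Category.assoc, hw₀', hw1']
    have hτt : τ ≫ t = 0 := by
      rw [← hyt, hyw, Category.assoc, hν0, comp_zero]
    rw [← cancel_epi τ, hτt, comp_zero]
  refine ⟨hmono, ?_⟩
  intro T t ht
  have hτ1 := hqa₁ (p ▷ E2) t hspE2
  set τ₁ := pullback.snd (p ▷ E2) t
  set y := pullback.fst (p ▷ E2) t
  have hy : y ≫ (p ▷ E2) = τ₁ ≫ t := pullback.condition
  have h1 : (y ≫ (P ◁ g)) ≫ (p ▷ E3) = 0 := by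
    rw [Category.assoc, whisker_exchange p g, ← Category.assoc, hy, Category.assoc, ht,
      comp_zero]
  obtain ⟨w, hw⟩ := KernelFork.IsLimit.lift' hkE'' _ h1
  have hw' : w ≫ (kernel.ι p ▷ E3) = y ≫ (P ◁ g) := by simpa using hw
  have hτ2 := hqa₁ (kernel p ◁ g) w hsKg
  set τ₂ := pullback.snd (kernel p ◁ g) w
  set v := pullback.fst (kernel p ◁ g) w
  have hv : v ≫ (kernel p ◁ g) = τ₂ ≫ w := pullback.condition
  have h2 : (τ₂ ≫ y - v ≫ (kernel.ι p ▷ E2)) ≫ (P ◁ g) = 0 := by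
    rw [Preadditive.sub_comp, Category.assoc, Category.assoc, ← whisker_exchange (kernel.ι p) g,
      ← Category.assoc v, hv, Category.assoc, hw', ← Category.assoc, sub_self]
  obtain ⟨u, hu⟩ := liftPf (τ₂ ≫ y - v ≫ (kernel.ι p ▷ E2)) h2
  have he : IsStrictEpi (τ₂ ≫ τ₁) := isStrictEpi_comp hqa₁ hτ2 hτ1
  have hs2 : (u ≫ (p ▷ E1)) ≫ (X ◁ f) = (τ₂ ≫ τ₁) ≫ t := by
    rw [Category.assoc, ← whisker_exchange p f, ← Category.assoc, hu, Preadditive.sub_comp,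
      Category.assoc, Category.assoc, hy, wE, comp_zero, sub_zero, ← Category.assoc]
  have hker0 : kernel.ι (τ₂ ≫ τ₁) ≫ (u ≫ (p ▷ E1)) = 0 := by
    rw [← cancel_mono (X ◁ f), Category.assoc, hs2, zero_comp, ← Category.assoc,
      kernel.condition, zero_comp]
  obtain ⟨s, hs⟩ := he.desc (u ≫ (p ▷ E1)) hker0
  refine ⟨s, ?_⟩
  haveI : Epi (τ₂ ≫ τ₁) := he.1
  rw [← cancel_epi (τ₂ ≫ τ₁), ← Category.assoc, hs, hs2]

end Aux

/-- In a closed symmetric monoidal quasi-abelian category with enough flat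
projectives, in any strictly exact sequence `0 → E' → E → E'' → 0` with `E` and `E''`
flat, `E'` is flat (two-out-of-three for flat objects). -/
theorem stmt9 [Preadditive C] [HasKernels C] [HasCokernels C]
    [MonoidalCategory C] [SymmetricCategory C] [MonoidalClosed C]
    [HasPullbacks C] [HasPushouts C]
    (hqa₁ : ∀ {X Y Z : C} (f : X ⟶ Z) (g : Y ⟶ Z),
      IsStrictEpi f → IsStrictEpi (pullback.snd f g))
    (hqa₂ : ∀ {X Y Z : C} (f : X ⟶ Y) (g : X ⟶ Z),
      (Mono f ∧ IsStrictMorphism f) → (Mono (pushout.inr f g) ∧ IsStrictMorphism (pushout.inr f g)))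
    (hefp : ∀ X : C, ∃ (P : C) (p : P ⟶ X), IsStrictEpi p ∧ IsFlat P ∧ IsProjectiveStrict P)
    {E' E E'' : C} (f : E' ⟶ E) (g : E ⟶ E'')
    (hses : IsStrictSES f g) (hE : IsFlat E) (hE'' : IsFlat E'') :
    IsFlat E' := by
  intro A' A A'' a b hab
  obtain ⟨wfg, hrest⟩ := hses
  obtain ⟨wab, ⟨hker_ab⟩, ⟨hcoker_ab⟩⟩ := hab
  obtain ⟨wE, ⟨hkE⟩, -⟩ := hE a b ⟨wab, ⟨hker_ab⟩, ⟨hcoker_ab⟩⟩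
  obtain ⟨wE'', ⟨hkE''⟩, -⟩ := hE'' a b ⟨wab, ⟨hker_ab⟩, ⟨hcoker_ab⟩⟩
  obtain ⟨mA, -⟩ := purity hqa₁ hqa₂ hefp ⟨wfg, hrest⟩ hE hE'' A
  obtain ⟨mA', lA'⟩ := purity hqa₁ hqa₂ hefp ⟨wfg, hrest⟩ hE hE'' A'
  haveI := mA
  haveI := mA'
  haveI monoaE : Mono (a ▷ E) := by
    have := mono_of_isLimit_fork hkE
    simpa using this
  haveI monoaE'' : Mono (a ▷ E'') := by
    have := mono_of_isLimit_fork hkE''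
    simpa using this
  have w0 : (a ▷ E') ≫ (b ▷ E') = 0 := by
    rw [← MonoidalCategory.comp_whiskerRight, wab, whiskerRight_zero']
  haveI hmono : Mono (a ▷ E') := by
    have hexch : (a ▷ E') ≫ (A ◁ f) = (A' ◁ f) ≫ (a ▷ E) := (whisker_exchange a f).symm
    haveI : Mono ((A' ◁ f) ≫ (a ▷ E)) := mono_comp _ _
    haveI : Mono ((a ▷ E') ≫ (A ◁ f)) := by rw [hexch]; infer_instance
    exact mono_of_mono (a ▷ E') (A ◁ f)
  refine ⟨w0, ⟨?_⟩, ⟨isCokernel_whiskerRight wab hcoker_ab E'⟩⟩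
  refine KernelFork.IsLimit.ofι' _ _ ?_
  intro T t ht
  have h1 : (t ≫ (A ◁ f)) ≫ (b ▷ E) = 0 := by
    rw [Category.assoc, whisker_exchange b f, ← Category.assoc, ht, zero_comp]
  obtain ⟨s, hs⟩ := KernelFork.IsLimit.lift' hkE _ h1
  have hs' : s ≫ (a ▷ E) = t ≫ (A ◁ f) := by simpa using hs
  have h2 : s ≫ (A' ◁ g) = 0 := by
    rw [← cancel_mono (a ▷ E''), Category.assoc, whisker_exchange a g, ← Category.assoc, hs',
      Category.assoc, ← MonoidalCategory.whiskerLeft_comp, wfg, whiskerLeft_zero', comp_zero,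
      zero_comp]
  refine ⟨(lA' s h2).choose, ?_⟩
  have hch : (lA' s h2).choose ≫ (A' ◁ f) = s := (lA' s h2).choose_spec
  rw [← cancel_mono (A ◁ f), Category.assoc, ← whisker_exchange a f, ← Category.assoc, hch, hs']
end

section
/- Let A → B be an epimorphism of commutative monoids in a closed symmetric monoidal quasi-abelian category (i.e., B ⊗_A B → B is an isomorphism). Then for any B-modules M and N, the natural morphism M ⊗_A N → M ⊗_B N is an isomorphism. -/
open TensorProduct

/-- Let `A → B` be an epimorphism of commutative monoids (i.e. the
multiplication `B ⊗_A B → B` is an isomorphism). Then for any `B`-modules `M` and `N`,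
the natural morphism `M ⊗_A N → M ⊗_B N` is an isomorphism. -/
theorem stmt10 {A B : Type*} [CommRing A] [CommRing B] [Algebra A B]
    (hepi : Function.Bijective (LinearMap.mul' A B))
    (M N : Type*) [AddCommGroup M] [AddCommGroup N]
    [Module A M] [Module A N] [Module B M] [Module B N]
    [IsScalarTower A B M] [IsScalarTower A B N] :
    Function.Bijective (TensorProduct.mapOfCompatibleSMul B A A M N) := by
  have key : ∀ b : B, (b ⊗ₜ[A] (1 : B)) = (1 : B) ⊗ₜ[A] b := by
    intro b
    apply hepi.injective
    simp [LinearMap.mul'_apply]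
  have compat : ∀ (b : B) (m : M) (n : N), (b • m) ⊗ₜ[A] n = m ⊗ₜ[A] (b • n) := by
    intro b m n
    let f : B ⊗[A] B →ₗ[A] M ⊗[A] N := TensorProduct.lift
      { toFun := fun x ↦
          { toFun := fun y ↦ (x • m) ⊗ₜ[A] (y • n)
            map_add' := fun y z ↦ by simp [add_smul, TensorProduct.tmul_add]
            map_smul' := fun a y ↦ by
              simp [smul_assoc, TensorProduct.tmul_smul] }
        map_add' := fun x y ↦ by
          ext z
          simp [add_smul, TensorProduct.add_tmul]
        map_smul' := fun a x ↦ by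
          ext z
          simp [smul_assoc, TensorProduct.smul_tmul'] }
    have h := congrArg f (key b)
    simpa [f] using h
  haveI : TensorProduct.CompatibleSMul A B M N := ⟨compat⟩
  exact (TensorProduct.equivOfCompatibleSMul B A A M N).bijective
end

section
/- Let C be a Noetherian commutative ring, r > 0, and f ∈ C. Then multiplication by (X − f) on the overconvergent power series algebra C⟨r⁻¹X⟩† is injective. (The proof uses that the ascending chain of annihilator ideals ker(μ_f) ⊆ ker(μ_{f²}) ⊆ ... stabilizes.) -/
/-- A power series over a semi-normed ring `(A, ν)` is overconvergent for radius `r` if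
it converges on a disk of some radius strictly larger than `r`. The overconvergent power
series algebra `A⟨r⁻¹X⟩†` consists of such power series. -/
def Overconvergent {A : Type*} [CommRing A] (ν : RingSeminorm A) (r : ℝ)
    (f : PowerSeries A) : Prop :=
  ∃ r' : ℝ, r < r' ∧ Summable (fun i : ℕ => ν (PowerSeries.coeff i f) * r' ^ i)

theorem X_sub_C_nzd {A : Type*} [CommRing A] [IsNoetherianRing A] (f : A)
    (g : PowerSeries A) (hg : (PowerSeries.X - PowerSeries.C f) * g = 0) : g = 0 := by
  have h0 : f * PowerSeries.coeff 0 g = 0 := by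
    have := congrArg (PowerSeries.coeff 0) hg
    simp only [sub_mul, map_sub, map_mul, PowerSeries.coeff_C_mul,
      map_zero] at this
    simpa [PowerSeries.coeff_zero_eq_constantCoeff, neg_eq_zero] using this
  have hn1 : ∀ n : ℕ, PowerSeries.coeff n g = f * PowerSeries.coeff (n + 1) g := by
    intro n
    have := congrArg (PowerSeries.coeff (n + 1)) hg
    simp only [sub_mul, map_sub, PowerSeries.coeff_succ_X_mul, PowerSeries.coeff_C_mul,
      map_zero, sub_eq_zero] at this
    exact this
  have hpow : ∀ n : ℕ, f ^ (n + 1) * PowerSeries.coeff n g = 0 := by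
    intro n
    induction n with
    | zero => simpa using h0
    | succ n ih =>
      have : f ^ (n + 2) * PowerSeries.coeff (n + 1) g
          = f ^ (n + 1) * (f * PowerSeries.coeff (n + 1) g) := by ring
      rw [this, ← hn1 n, ih]
  have hiter : ∀ n k : ℕ, PowerSeries.coeff n g = f ^ k * PowerSeries.coeff (n + k) g := by
    intro n k
    induction k with
    | zero => simp
    | succ k ih =>
      rw [ih, hn1 (n + k)]
      ring_nf
  -- Noetherian chain of annihilators
  let I : ℕ →o Submodule A A :=
    ⟨fun n => LinearMap.ker (LinearMap.mulLeft A (f ^ n)), by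
      intro m n hmn x hx
      simp only [LinearMap.mem_ker, LinearMap.mulLeft_apply] at hx ⊢
      obtain ⟨c, rfl⟩ := Nat.exists_eq_add_of_le hmn
      rw [pow_add, mul_comm (f ^ m), mul_assoc, hx, mul_zero]⟩
  obtain ⟨N, hN⟩ := monotone_stabilizes_iff_noetherian.mpr inferInstance I
  have hfN : ∀ n : ℕ, f ^ N * PowerSeries.coeff n g = 0 := by
    intro n
    have h1 : PowerSeries.coeff n g ∈ I (n + 1) := by
      exact hpow n
    have h2 : I (n + 1) ≤ I (N + n + 1) := I.monotone (by omega)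
    have h3 : I (N + n + 1) = I N := (hN (N + n + 1) (by omega)).symm
    have : PowerSeries.coeff n g ∈ I N := h3 ▸ h2 h1
    exact this
  ext n
  rw [hiter n N, hfN (n + N), map_zero]

/-- Let `A` be a Noetherian commutative ring (with a ring seminorm `ν`
defining overconvergence), `r > 0` and `f ∈ A`. Then multiplication by `X - f` on the
overconvergent power series algebra `A⟨r⁻¹X⟩†` is injective. -/
theorem stmt13 {A : Type*} [CommRing A] [IsNoetherianRing A]
    (ν : RingSeminorm A) (r : ℝ) (hr : 0 < r) (f : A)
    (a b : PowerSeries A)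
    (ha : Overconvergent ν r a) (hb : Overconvergent ν r b)
    (heq : (PowerSeries.X - PowerSeries.C f) * a =
           (PowerSeries.X - PowerSeries.C f) * b) :
    a = b := by
  have h : (PowerSeries.X - PowerSeries.C f) * (a - b) = 0 := by
    rw [mul_sub, heq, sub_self]
  have := X_sub_C_nzd f (a - b) h
  exact sub_eq_zero.mp this
end
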